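/- arXiv:1502.01960 — 4 statements merged into one kernel-verified Lean document; each statement's English description precedes it below -/
import Mathlib

section
/- For α > 0 and 0 ≤ θ < α + 2, the equilibria (±1, 0) of the system dx/dt = -x³+x-μ, dμ/dt = -(α-θ)μ + θ(x³-x) are linearly stable: both eigenvalues of the Jacobian at (±1,0) have strictly negative real part. For θ > α + 2, the Jacobian at (±1,0) has an eigenvalue with strictly positive real part. -/
lemma det_eq (α θ : ℝ) (l : ℂ) :
    Matrix.det (!![(-2 : ℂ), -1; 2 * (θ : ℂ), -((α : ℂ) - (θ : ℂ))]
        - l • (1 : Matrix (Fin 2) (Fin 2) ℂ))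
      = l ^ 2 + ((2 : ℂ) + α - θ) * l + 2 * α := by
  simp [Matrix.det_fin_two, Matrix.sub_apply, Matrix.smul_apply, Matrix.one_apply]
  ring

/-- For `0 ≤ θ < α + 2`, the equilibria `(±1, 0)` are linearly stable: every (complex)
eigenvalue of the Jacobian `[[-2, -1], [2θ, -(α-θ)]]` has strictly negative real part.
For `θ > α + 2`, the Jacobian has an eigenvalue with strictly positive real part. -/
theorem pm_one_stability (α θ : ℝ) (hα : 0 < α) (hθ : 0 ≤ θ) :
    (θ < α + 2 →
      ∀ l : ℂ,
        Matrix.det (!![(-2 : ℂ), -1; 2 * (θ : ℂ), -((α : ℂ) - (θ : ℂ))]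
          - l • (1 : Matrix (Fin 2) (Fin 2) ℂ)) = 0 → l.re < 0) ∧
    (α + 2 < θ →
      ∃ l : ℂ,
        Matrix.det (!![(-2 : ℂ), -1; 2 * (θ : ℂ), -((α : ℂ) - (θ : ℂ))]
          - l • (1 : Matrix (Fin 2) (Fin 2) ℂ)) = 0 ∧ 0 < l.re) := by
  constructor
  · intro hlt l hl
    rw [det_eq] at hl
    set x := l.re with hx
    set y := l.im with hy
    have hb : (0:ℝ) < 2 + α - θ := by linarith
    have hre := congrArg Complex.re hl
    have him := congrArg Complex.im hl
    simp [Complex.add_re, Complex.add_im, Complex.mul_re, Complex.mul_im, pow_two,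
      Complex.sub_re, Complex.sub_im, Complex.ofReal_re, Complex.ofReal_im] at hre him
    -- hre : x*x - y*y + (2+α-θ)*x + 2*α = 0 (roughly)
    -- him : x*y + y*x + (2+α-θ)*y = 0
    have him' : y * (2 * x + (2 + α - θ)) = 0 := by nlinarith [him]
    rcases mul_eq_zero.mp him' with h | h
    · nlinarith [hre, sq_nonneg x]
    · nlinarith
  · intro hgt
    set T : ℝ := θ - α - 2 with hT
    have hTpos : 0 < T := by simp [hT]; linarith
    have hD : (0:ℝ) < 2 * α := by linarith
    by_cases hdisc : 4 * (2 * α) ≤ T ^ 2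
    · set s : ℝ := Real.sqrt (T ^ 2 - 4 * (2 * α)) with hs
      have hs2 : s ^ 2 = T ^ 2 - 4 * (2 * α) := Real.sq_sqrt (by linarith)
      have hsnn : 0 ≤ s := Real.sqrt_nonneg _
      refine ⟨((T + s) / 2 : ℝ), ?_, ?_⟩
      · rw [det_eq]
        have : ((((T + s) / 2 : ℝ) : ℂ)) ^ 2 + ((2 : ℂ) + α - θ) * (((T + s) / 2 : ℝ) : ℂ) + 2 * α
            = ((((T + s) / 2) ^ 2 + (2 + α - θ) * ((T + s) / 2) + 2 * α : ℝ) : ℂ) := by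
          push_cast; ring
        rw [this]
        norm_cast
        nlinarith [hs2]
      · simp
        positivity
    · push_neg at hdisc
      set u : ℝ := Real.sqrt (4 * (2 * α) - T ^ 2) with hu
      have hu2 : u ^ 2 = 4 * (2 * α) - T ^ 2 := Real.sq_sqrt (by linarith)
      refine ⟨⟨T / 2, u / 2⟩, ?_, by simpa using by positivity⟩
      rw [det_eq]
      apply Complex.ext <;>
        simp [Complex.add_re, Complex.add_im, Complex.mul_re, Complex.mul_im, pow_two,
          Complex.ofReal_re, Complex.ofReal_im] <;>
        nlinarith [hu2]
end

section
/- At θ = α + 2, the Jacobian of the field V(x,μ) = (-x³+x-μ, -(α-θ)μ+θ(x³-x)) at the equilibrium (1,0) has purely imaginary nonzero eigenvalues ±i√(2α). -/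
/-- At `θ = α + 2`, the Jacobian `[[-2, -1], [2(α+2), 2]]` at the equilibrium `(1,0)` has
purely imaginary nonzero eigenvalues `± i√(2α)`. -/
theorem hopf_eigenvalues (α : ℝ) (hα : 0 < α) :
    (∀ l : ℂ,
      Matrix.det (!![(-2 : ℂ), -1; 2 * ((α : ℂ) + 2), 2]
        - l • (1 : Matrix (Fin 2) (Fin 2) ℂ)) = 0 ↔
        (l = Complex.I * (Real.sqrt (2 * α) : ℂ) ∨
         l = -(Complex.I * (Real.sqrt (2 * α) : ℂ)))) ∧
    Complex.I * (Real.sqrt (2 * α) : ℂ) ≠ 0 := by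
  set s : ℂ := ((Real.sqrt (2 * α) : ℝ) : ℂ) with hs_def
  have hs : s ^ 2 = 2 * (α : ℂ) := by
    rw [hs_def, ← Complex.ofReal_pow, Real.sq_sqrt (by linarith)]
    push_cast; ring
  have hsne : s ≠ 0 := by
    rw [hs_def]
    exact_mod_cast (Real.sqrt_ne_zero'.mpr (by linarith) : Real.sqrt (2 * α) ≠ 0)
  constructor
  · intro l
    have hdet : Matrix.det (!![(-2 : ℂ), -1; 2 * ((α : ℂ) + 2), 2]
        - l • (1 : Matrix (Fin 2) (Fin 2) ℂ)) =
        (l - Complex.I * s) * (l + Complex.I * s) := by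
      have : (l - Complex.I * s) * (l + Complex.I * s) = l ^ 2 - Complex.I ^ 2 * s ^ 2 := by
        ring
      rw [this, Complex.I_sq, hs]
      simp [Matrix.det_fin_two, Matrix.smul_apply, Matrix.one_apply]
      ring
    rw [hdet, mul_eq_zero, sub_eq_zero, add_eq_zero_iff_eq_neg]
  · exact mul_ne_zero Complex.I_ne_zero hsne
end

section
/- For α, θ > 0 there exists R > 0 such that for all (x,μ) with x² + μ² ≥ R², the function W(x,μ) = x²/2 + (θx+μ)²/(2αθ) satisfies ∇W(x,μ)·V(x,μ) < 0, where V is the drift V(x,μ) = (-x³+x-μ, -(α-θ)μ+θ(x³-x)). Consequently every solution of the ODE system is bounded forward in time. -/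
/-!
Along the flow, `W(x,μ) = x²/2 + (θx+μ)²/(2αθ)` changes at the rate
`-x⁴ + (1+θ)x² - (θx+μ)²/θ`. This is negative far from the origin: when `x² > 1+θ` the quartic
term wins, and otherwise `μ` is large, so `(θx+μ)²/θ` dominates the bounded term `(1+θ)x²`.
Since `W` is comparable to `x² + μ²`, a level of `W` above its maximum on the ball of radius `R`
can never be crossed upwards, which confines every forward trajectory.
-/

noncomputable def lyapunovW (α θ x μ : ℝ) : ℝ :=
  x ^ 2 / 2 + (θ * x + μ) ^ 2 / (2 * α * θ)

theorem le_of_hasDerivAt_neg_at_level {g g' : ℝ → ℝ} {a B : ℝ}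
    (hg : ∀ t, HasDerivAt g (g' t) t) (ha : g a ≤ B) (hB : ∀ t, g t = B → g' t < 0)
    {t : ℝ} (ht : a ≤ t) : g t ≤ B :=
  image_le_of_deriv_right_lt_deriv_boundary (B' := fun _ => 0)
    (fun s _ => (hg s).continuousAt.continuousWithinAt) (fun s _ => (hg s).hasDerivWithinAt)
    ha (fun _ => hasDerivAt_const _ B) (fun s _ => hB s) ⟨ht, le_rfl⟩

section Lyapunov

variable {α θ : ℝ}

theorem gradient_lyapunovW_dot_drift (hα : α ≠ 0) (hθ : θ ≠ 0) (x μ : ℝ) :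
    (x + (θ * x + μ) / α) * (-x ^ 3 + x - μ)
        + ((θ * x + μ) / (α * θ)) * (-(α - θ) * μ + θ * (x ^ 3 - x))
      = -x ^ 4 + (1 + θ) * x ^ 2 - (θ * x + μ) ^ 2 / θ := by
  field_simp
  ring

theorem orbital_derivative_neg (hθ : 0 < θ) {x μ : ℝ}
    (h : ((2 + 2 * θ) * (1 + 2 * θ)) ^ 2 ≤ x ^ 2 + μ ^ 2) :
    -x ^ 4 + (1 + θ) * x ^ 2 - (θ * x + μ) ^ 2 / θ < 0 := by
  suffices θ * (-x ^ 4 + (1 + θ) * x ^ 2) < (θ * x + μ) ^ 2 by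
    rw [sub_neg, lt_div_iff₀ hθ]
    linarith
  rcases lt_or_ge (1 + θ) (x ^ 2) with hx | hx
  · have : -x ^ 4 + (1 + θ) * x ^ 2 < 0 := by nlinarith
    nlinarith [sq_nonneg (θ * x + μ)]
  · have hμ : μ ^ 2 ≤ 2 * (θ * x + μ) ^ 2 + 2 * θ ^ 2 * x ^ 2 := by
      nlinarith [sq_nonneg (θ * x + μ + θ * x)]
    have hR : (1 + θ) * (1 + 2 * θ + 4 * θ ^ 2) < ((2 + 2 * θ) * (1 + 2 * θ)) ^ 2 := by
      nlinarith [mul_pos hθ hθ, mul_pos (mul_pos hθ hθ) hθ, mul_pos (mul_pos hθ hθ) (mul_pos hθ hθ)]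
    nlinarith [sq_nonneg x, mul_nonneg hθ.le (sq_nonneg x), mul_nonneg hθ.le (sq_nonneg (x ^ 2)),
      mul_le_mul_of_nonneg_left hx (mul_nonneg hθ.le hθ.le),
      mul_le_mul_of_nonneg_left hx (mul_nonneg hθ.le (by linarith : (0 : ℝ) ≤ 1 + θ))]

theorem hasDerivAt_lyapunovW_comp (hθ : θ ≠ 0) {x μ : ℝ → ℝ} {x' μ' t : ℝ}
    (hx : HasDerivAt x x' t) (hμ : HasDerivAt μ μ' t) :
    HasDerivAt (fun s => lyapunovW α θ (x s) (μ s))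
      ((x t + (θ * x t + μ t) / α) * x' + ((θ * x t + μ t) / (α * θ)) * μ') t := by
  have hv := (hx.const_mul θ).add hμ
  have hW := ((hx.mul hx).div_const 2).add ((hv.mul hv).div_const (2 * α * θ))
  refine (hW.congr_deriv ?_).congr_of_eventuallyEq (.of_forall fun s => ?_)
  · simp only [Pi.add_apply]
    field_simp
    ring
  · simp only [lyapunovW, Pi.add_apply, Pi.mul_apply]
    ring

theorem lyapunovW_le (hα : 0 < α) (hθ : 0 < θ) (x μ : ℝ) :
    lyapunovW α θ x μ ≤ (1 / 2 + (θ ^ 2 + 1) / (2 * α * θ)) * (x ^ 2 + μ ^ 2) := by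
  have hcs : (θ * x + μ) ^ 2 ≤ (θ ^ 2 + 1) * (x ^ 2 + μ ^ 2) := by
    nlinarith [sq_nonneg (θ * μ - x)]
  calc lyapunovW α θ x μ
      ≤ (x ^ 2 + μ ^ 2) / 2 + (θ ^ 2 + 1) * (x ^ 2 + μ ^ 2) / (2 * α * θ) := by
        unfold lyapunovW
        gcongr
        linarith [sq_nonneg μ]
    _ = _ := by ring

theorem sq_add_sq_le_lyapunovW (hα : 0 < α) (hθ : 0 < θ) (x μ : ℝ) :
    x ^ 2 + μ ^ 2 ≤ (2 + 4 * θ ^ 2 + 4 * α * θ) * lyapunovW α θ x μ := by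
  have hμ : μ ^ 2 ≤ 2 * (θ * x + μ) ^ 2 + 2 * θ ^ 2 * x ^ 2 := by
    nlinarith [sq_nonneg (θ * x + μ + θ * x)]
  have hαθ : 0 < α * θ := mul_pos hα hθ
  have hW : (2 + 4 * θ ^ 2 + 4 * α * θ) * lyapunovW α θ x μ
      = (1 + 2 * θ ^ 2 + 2 * α * θ) * x ^ 2
        + (2 + 4 * θ ^ 2 + 4 * α * θ) * (θ * x + μ) ^ 2 / (2 * α * θ) := by
    rw [lyapunovW]
    ring
  have hq : 2 * (θ * x + μ) ^ 2
      ≤ (2 + 4 * θ ^ 2 + 4 * α * θ) * (θ * x + μ) ^ 2 / (2 * α * θ) := by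
    rw [le_div_iff₀ (by positivity)]
    nlinarith [sq_nonneg (θ * x + μ), mul_nonneg (mul_nonneg hαθ.le (sq_nonneg θ))
      (sq_nonneg (θ * x + μ)), mul_nonneg hαθ.le (sq_nonneg (θ * x + μ))]
  nlinarith [mul_nonneg hαθ.le (sq_nonneg x)]

end Lyapunov

/-- There is `R > 0` such that `∇W · V < 0` outside the ball of radius `R`, where
`W(x,μ) = x²/2 + (θx+μ)²/(2αθ)` and `V` is the drift of the deterministic system;
consequently every solution of the ODE system is bounded forward in time. -/
theorem lyapunov_confinement (α θ : ℝ) (hα : 0 < α) (hθ : 0 < θ) :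
    ∃ R : ℝ, 0 < R ∧
      (∀ x μ : ℝ, R ^ 2 ≤ x ^ 2 + μ ^ 2 →
        (x + (θ * x + μ) / α) * (-x ^ 3 + x - μ)
          + ((θ * x + μ) / (α * θ)) * (-(α - θ) * μ + θ * (x ^ 3 - x)) < 0) ∧
      (∀ x μ : ℝ → ℝ,
        (∀ t, HasDerivAt x (-(x t) ^ 3 + x t - μ t) t) →
        (∀ t, HasDerivAt μ (-(α - θ) * μ t + θ * ((x t) ^ 3 - x t)) t) →
        ∃ M : ℝ, ∀ t : ℝ, 0 ≤ t → (x t) ^ 2 + (μ t) ^ 2 ≤ M) := by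
  set R := (2 + 2 * θ) * (1 + 2 * θ)
  have hdecay : ∀ x μ : ℝ, R ^ 2 ≤ x ^ 2 + μ ^ 2 →
      (x + (θ * x + μ) / α) * (-x ^ 3 + x - μ)
        + ((θ * x + μ) / (α * θ)) * (-(α - θ) * μ + θ * (x ^ 3 - x)) < 0 := fun x μ h => by
    rw [gradient_lyapunovW_dot_drift hα.ne' hθ.ne']
    exact orbital_derivative_neg hθ h
  refine ⟨R, by positivity, hdecay, fun x μ hx hμ => ?_⟩
  set C := 1 / 2 + (θ ^ 2 + 1) / (2 * α * θ)
  have hC : 0 < C := by positivity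
  set B := max (lyapunovW α θ (x 0) (μ 0)) (C * R ^ 2)
  have hlevel : ∀ t, lyapunovW α θ (x t) (μ t) = B → R ^ 2 ≤ x t ^ 2 + μ t ^ 2 := fun t ht => by
    by_contra! hin
    have := (lyapunovW_le hα hθ (x t) (μ t)).trans_lt (mul_lt_mul_of_pos_left hin hC)
    exact (le_max_right _ _).not_gt (ht ▸ this)
  refine ⟨(2 + 4 * θ ^ 2 + 4 * α * θ) * B, fun t ht => ?_⟩
  have hW := le_of_hasDerivAt_neg_at_level
    (fun s => hasDerivAt_lyapunovW_comp hθ.ne' (hx s) (hμ s)) (le_max_left _ _)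
    (fun s hs => hdecay _ _ (hlevel s hs)) ht
  exact (sq_add_sq_le_lyapunovW hα hθ _ _).trans (by gcongr)
end

section
/- For every σ > 0, the point s₅ = (0, 0, (1+√(1+6σ²))/(6σ²)) is an equilibrium of the system dm/dt = -m³+m-ν-3σ²mV, dν/dt = -αν - θ(dm/dt), dV/dt = 1 + 2(1-3m²)V - 6σ²V², and for σ² > 1/3 all equilibria with V ≥ 0 have m = 0, i.e., s₅ is the unique equilibrium in {(m,ν,V) : V ≥ 0}. -/
/-- For every `σ > 0`, `s₅ = (0, 0, (1+√(1+6σ²))/(6σ²))` is an equilibrium of the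
Gaussian-approximation system; moreover for `σ² > 1/3` it is the unique equilibrium in
the half-space `{V ≥ 0}`. -/
theorem s5_equilibrium_and_uniqueness (α θ σ : ℝ) (hα : 0 < α) (hθ : 0 ≤ θ) (hσ : 0 < σ)
    (V₅ : ℝ) (hV₅ : V₅ = (1 + Real.sqrt (1 + 6 * σ ^ 2)) / (6 * σ ^ 2)) :
    (-(0 : ℝ) ^ 3 + 0 - 0 - 3 * σ ^ 2 * 0 * V₅ = 0 ∧
      -α * 0 - θ * (-(0 : ℝ) ^ 3 + 0 - 0 - 3 * σ ^ 2 * 0 * V₅) = 0 ∧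
      1 + 2 * (1 - 3 * (0 : ℝ) ^ 2) * V₅ - 6 * σ ^ 2 * V₅ ^ 2 = 0) ∧
    (1 / 3 < σ ^ 2 →
      ∀ m ν V : ℝ, 0 ≤ V →
        -m ^ 3 + m - ν - 3 * σ ^ 2 * m * V = 0 →
        -α * ν - θ * (-m ^ 3 + m - ν - 3 * σ ^ 2 * m * V) = 0 →
        1 + 2 * (1 - 3 * m ^ 2) * V - 6 * σ ^ 2 * V ^ 2 = 0 →
        m = 0 ∧ ν = 0 ∧ V = V₅) := by
  have hσ2 : 0 < σ ^ 2 := by positivity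
  set s := Real.sqrt (1 + 6 * σ ^ 2) with hs
  have hs0 : 0 ≤ s := Real.sqrt_nonneg _
  have hs2 : s ^ 2 = 1 + 6 * σ ^ 2 := Real.sq_sqrt (by positivity)
  have hs1 : 1 < s := by nlinarith
  clear_value s
  have hV₅eq : 1 + 2 * V₅ - 6 * σ ^ 2 * V₅ ^ 2 = 0 := by
    rw [hV₅]; field_simp; nlinarith
  have hV₅pos : 0 < V₅ := by
    rw [hV₅]; positivity
  refine ⟨⟨by ring, by ring, by linarith [hV₅eq]⟩, ?_⟩
  intro hσ3 m ν V hV h1 h2 h3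
  have hν : ν = 0 := by
    rw [h1] at h2
    have := h2
    nlinarith
  have hm : m = 0 := by
    by_contra hm0
    -- from h1 with ν = 0 : m (1 - m² - 3σ²V) = 0, so 1 - m² - 3σ²V = 0
    have hfac : 1 - m ^ 2 - 3 * σ ^ 2 * V = 0 := by
      have : m * (1 - m ^ 2 - 3 * σ ^ 2 * V) = 0 := by
        rw [hν] at h1; nlinarith [h1]
      rcases mul_eq_zero.1 this with h | h
      · exact absurd h hm0
      · exact h
    -- substitute m² = 1 - 3σ²V into h3 : get 1 - 4V + 12σ²V² = 0
    have hq : 12 * σ ^ 2 * V ^ 2 - 4 * V + 1 = 0 := by nlinarith [h3, hfac]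
    rcases eq_or_lt_of_le hV with h0 | h0
    · rw [← h0] at hq; norm_num at hq
    · nlinarith [sq_nonneg (2 * V - 1),
        mul_pos (mul_pos (by linarith : (0:ℝ) < 12 * σ ^ 2 - 4) h0) h0, hq]
  subst hm
  refine ⟨rfl, hν, ?_⟩
  have h3' : 1 + 2 * V - 6 * σ ^ 2 * V ^ 2 = 0 := by linear_combination h3
  -- (V - V₅)(6σ²(V+V₅) - 2) = 0 and second factor positive
  have hV₅big : 6 * σ ^ 2 * V₅ = 1 + s := by
    rw [hV₅]; field_simp
  have hfac2 : (V - V₅) * (6 * σ ^ 2 * (V + V₅) - 2) = 0 := by linear_combination hV₅eq - h3'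
  have hpos : 0 < 6 * σ ^ 2 * (V + V₅) - 2 := by
    have h6 : 0 ≤ 6 * σ ^ 2 * V := by positivity
    have hd : 6 * σ ^ 2 * (V + V₅) = 6 * σ ^ 2 * V + 6 * σ ^ 2 * V₅ := by ring
    rw [hd, hV₅big]; linarith
  rcases mul_eq_zero.1 hfac2 with h | h
  · linarith
  · linarith
end
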